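/- If L ≥ 3 and C is a cluster of level at least 1 with mass m(C) = k, then diam(C) = ω(C) − α(C) ≤ 3L^{k−1}. -/
import Mathlib


open scoped Classical

noncomputable section

/-- `α(C)`: the smallest element of a cluster. -/
def clAlpha (c : Finset ℕ) : ℕ := sInf (↑c : Set ℕ)

/-- `ω(C)`: the largest element of a cluster. -/
def clOmega (c : Finset ℕ) : ℕ := sSup (↑c : Set ℕ)

/-- Euclidean distance between two finite subsets of `ℤ₊`. -/
def clDist (a b : Finset ℕ) : ℕ :=
  sInf {d : ℕ | ∃ x ∈ a, ∃ y ∈ b, d = max x y - min x y}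

/-- A maximal `(k+1)`-run among a family `F` of clusters: at least two consecutive members
of `F`, successive ones at Euclidean distance `< L^(k+1)`, maximal in the sense that the
member of `F` immediately preceding (resp. following) the run, if any, is at distance
`≥ L^(k+1)`. -/
structure MaxRun (L k : ℕ) (F : Set (Finset ℕ)) where
  n : ℕ
  c : ℕ → Finset ℕ
  two_le : 2 ≤ n
  mem : ∀ i, i < n → c i ∈ F
  ordered : ∀ i, i + 1 < n → clOmega (c i) < clAlpha (c (i + 1))
  consecutive : ∀ i, i + 1 < n → ∀ b ∈ F,
    ¬(clOmega (c i) < clAlpha b ∧ clOmega b < clAlpha (c (i + 1)))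
  close : ∀ i, i + 1 < n → clDist (c i) (c (i + 1)) < L ^ (k + 1)
  max_below : ∀ b ∈ F, clOmega b < clAlpha (c 0) →
    (∀ b' ∈ F, ¬(clOmega b < clAlpha b' ∧ clOmega b' < clAlpha (c 0))) →
    L ^ (k + 1) ≤ clDist b (c 0)
  max_above : ∀ b ∈ F, clOmega (c (n - 1)) < clAlpha b →
    (∀ b' ∈ F, ¬(clOmega (c (n - 1)) < clAlpha b' ∧ clOmega b' < clAlpha b)) →
    L ^ (k + 1) ≤ clDist (c (n - 1)) b

/-- The span of a run: the smallest integer interval containing all of its constituents. -/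
def MaxRun.spanIcc {L k : ℕ} {F : Set (Finset ℕ)} (R : MaxRun L k F) : Finset ℕ :=
  Finset.Icc (clAlpha (R.c 0)) (clOmega (R.c (R.n - 1)))

/-- The cluster of level `k+1` produced by a maximal `(k+1)`-run: `span(run) ∩ Γ`. -/
def MaxRun.cluster {L k : ℕ} {F : Set (Finset ℕ)} (Γ : Set ℕ) (R : MaxRun L k F) : Finset ℕ :=
  R.spanIcc.filter (fun x => x ∈ Γ)

/-- The mass of the cluster produced by a run with constituent masses `m₁, …, m_n`:
`m₁ + ∑_{s=2}^n (m_s − k)`. -/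
def MaxRun.newMass {L k : ℕ} {F : Set (Finset ℕ)} (mass : Finset ℕ → ℕ) (R : MaxRun L k F) : ℕ :=
  mass (R.c 0) + ∑ i ∈ Finset.Ico 1 R.n, (mass (R.c i) - k)

/-- The recursive cluster hierarchy over the environment `Γ ⊆ ℤ₊` with parameter `L`:
`C 0` is the partition of `Γ` into singletons of mass one; `C (k+1)` consists of the
clusters produced by the maximal `(k+1)`-runs of clusters of `C k` of mass at least `k+1`,
together with the clusters of `C k` disjoint from the spans of all such runs. -/
structure ClusterHierarchy (L : ℕ) (Γ : Set ℕ) where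
  C : ℕ → Set (Finset ℕ)
  mass : Finset ℕ → ℕ
  C_zero : C 0 = {s | ∃ x ∈ Γ, s = {x}}
  mass_zero : ∀ x ∈ Γ, mass ({x} : Finset ℕ) = 1
  mem_succ : ∀ k c, c ∈ C (k + 1) ↔
    ((∃ R : MaxRun L k {b | b ∈ C k ∧ k + 1 ≤ mass b}, c = R.cluster Γ) ∨
     (c ∈ C k ∧ ∀ R : MaxRun L k {b | b ∈ C k ∧ k + 1 ≤ mass b},
        ∀ x ∈ c, x ∉ R.spanIcc))
  mass_succ : ∀ k (R : MaxRun L k {b | b ∈ C k ∧ k + 1 ≤ mass b}),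
    mass (R.cluster Γ) = R.newMass mass

namespace ClusterHierarchy

variable {L : ℕ} {Γ : Set ℕ}

/-- `c` is a cluster of the hierarchy. -/
def IsCluster (H : ClusterHierarchy L Γ) (c : Finset ℕ) : Prop := ∃ k, c ∈ H.C k

/-- The level `ℓ(C)` of a cluster: the smallest `k` with `C ∈ C_k`. -/
def level (H : ClusterHierarchy L Γ) (c : Finset ℕ) : ℕ := sInf {k | c ∈ H.C k}

/-- The set of levels of clusters containing `x`; `κ(x)` is its supremum. -/
def kappaSet (H : ClusterHierarchy L Γ) (x : ℕ) : Set ℕ :=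
  {ℓ | ∃ c, H.IsCluster c ∧ H.level c = ℓ ∧ x ∈ c}

/-- The limiting partition `C_∞`: the maximal clusters, i.e. clusters which are not met
by any cluster of strictly larger level. -/
def Cinf (H : ClusterHierarchy L Γ) : Set (Finset ℕ) :=
  {c | H.IsCluster c ∧
    ∀ c', H.IsCluster c' → (∃ x, x ∈ c ∧ x ∈ c') → H.level c' ≤ H.level c}

end ClusterHierarchy

end

lemma clAlpha_mem {c : Finset ℕ} (h : c.Nonempty) : clAlpha c ∈ c := by
  have : (↑c : Set ℕ).Nonempty := Finset.coe_nonempty.mpr h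
  exact_mod_cast Nat.sInf_mem this

lemma clOmega_mem {c : Finset ℕ} (h : c.Nonempty) : clOmega c ∈ c := by
  have : (↑c : Set ℕ).Nonempty := Finset.coe_nonempty.mpr h
  exact_mod_cast Nat.sSup_mem this c.finite_toSet.bddAbove

lemma clAlpha_le {c : Finset ℕ} {x : ℕ} (hx : x ∈ c) : clAlpha c ≤ x :=
  Nat.sInf_le (Finset.mem_coe.mpr hx)

lemma le_clOmega {c : Finset ℕ} {x : ℕ} (hx : x ∈ c) : x ≤ clOmega c :=
  le_csSup c.finite_toSet.bddAbove (Finset.mem_coe.mpr hx)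

lemma clDist_exists {a b : Finset ℕ} (ha : a.Nonempty) (hb : b.Nonempty) :
    ∃ x ∈ a, ∃ y ∈ b, clDist a b = max x y - min x y := by
  obtain ⟨x, hx⟩ := ha; obtain ⟨y, hy⟩ := hb
  have hne : {d : ℕ | ∃ x ∈ a, ∃ y ∈ b, d = max x y - min x y}.Nonempty :=
    ⟨_, x, hx, y, hy, rfl⟩
  exact Nat.sInf_mem hne

lemma arith_aux {L : ℕ} (hL : 3 ≤ L) : ∀ m : ℕ, 3 * (m + 2) + (m + 1) * L ≤ 3 * L ^ (m + 1) := by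
  intro m
  induction m with
  | zero => simpa using by omega
  | succ m ih =>
      have h3 : L ≤ L ^ (m + 1) := Nat.le_self_pow (by omega) L
      have h4 : 3 * L ^ (m + 1) * 3 ≤ 3 * L ^ (m + 1) * L :=
        Nat.mul_le_mul_left _ hL
      have hpow : 3 * L ^ (m + 1 + 1) = 3 * L ^ (m + 1) * L := by
        rw [pow_succ, ← mul_assoc]
      nlinarith [ih, h3, h4]

lemma cluster_diam_bound (L : ℕ) (hL : 3 ≤ L) (Γ : Set ℕ) (H : ClusterHierarchy L Γ) :
    ∀ k c, c ∈ H.C k →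
      c.Nonempty ∧ (↑c : Set ℕ) ⊆ Γ ∧ clOmega c ≤ clAlpha c + 3 * L ^ (H.mass c - 1) := by
  intro k
  induction k with
  | zero =>
      intro c hc
      rw [H.C_zero] at hc
      obtain ⟨x, hxΓ, rfl⟩ := hc
      refine ⟨⟨x, Finset.mem_singleton_self x⟩, ?_, ?_⟩
      · intro y hy
        have : y = x := by simpa using hy
        subst this; exact hxΓ
      · have ha : clAlpha {x} = x := by simp [clAlpha]
        have ho : clOmega {x} = x := by simp [clOmega]
        rw [ha, ho]; exact Nat.le_add_right _ _
  | succ k ih =>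
      intro c hc
      rw [H.mem_succ] at hc
      rcases hc with ⟨R, rfl⟩ | ⟨hc, -⟩
      swap
      · exact ih c hc
      have hn2 : 2 ≤ R.n := R.two_le
      have hmemF : ∀ i, i < R.n → R.c i ∈ H.C k ∧ k + 1 ≤ H.mass (R.c i) := R.mem
      have hC : ∀ i, i < R.n → (R.c i).Nonempty ∧ (↑(R.c i) : Set ℕ) ⊆ Γ ∧
          clOmega (R.c i) ≤ clAlpha (R.c i) + 3 * L ^ (H.mass (R.c i) - 1) :=
        fun i hi => ih _ (hmemF i hi).1
      set M := H.mass (R.cluster Γ) with hMdef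
      have hM : M = H.mass (R.c 0) + ∑ i ∈ Finset.Ico 1 R.n, (H.mass (R.c i) - k) := by
        rw [hMdef, H.mass_succ k R, MaxRun.newMass]
      have hterm : ∀ i ∈ Finset.Ico 1 R.n, 1 ≤ H.mass (R.c i) - k := by
        intro i hi
        have := (hmemF i (Finset.mem_Ico.mp hi).2).2; omega
      have hsum : R.n - 1 ≤ ∑ i ∈ Finset.Ico 1 R.n, (H.mass (R.c i) - k) := by
        calc R.n - 1 = ∑ _i ∈ Finset.Ico 1 R.n, 1 := by
              rw [Finset.sum_const, smul_eq_mul, mul_one, Nat.card_Ico]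
          _ ≤ _ := Finset.sum_le_sum hterm
      have hMi : ∀ i, i < R.n → H.mass (R.c i) + (R.n - 1) ≤ M := by
        intro i hi
        rcases Nat.eq_zero_or_pos i with rfl | hipos
        · omega
        · have hiI : i ∈ Finset.Ico 1 R.n := Finset.mem_Ico.mpr ⟨hipos, hi⟩
          have hsplit : H.mass (R.c i) - k +
              ∑ j ∈ (Finset.Ico 1 R.n).erase i, (H.mass (R.c j) - k) =
              ∑ j ∈ Finset.Ico 1 R.n, (H.mass (R.c j) - k) :=
            Finset.add_sum_erase _ (fun j => H.mass (R.c j) - k) hiI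
          have hcard : ((Finset.Ico 1 R.n).erase i).card = R.n - 2 := by
            rw [Finset.card_erase_of_mem hiI, Nat.card_Ico]; omega
          have herest : R.n - 2 ≤ ∑ j ∈ (Finset.Ico 1 R.n).erase i, (H.mass (R.c j) - k) := by
            calc R.n - 2 = ∑ _j ∈ (Finset.Ico 1 R.n).erase i, 1 := by
                  rw [Finset.sum_const, smul_eq_mul, mul_one, hcard]
              _ ≤ _ := Finset.sum_le_sum (fun j hj => hterm j (Finset.mem_of_mem_erase hj))
          have h0 : k + 1 ≤ H.mass (R.c 0) := (hmemF 0 (by omega)).2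
          have hik : k + 1 ≤ H.mass (R.c i) := (hmemF i hi).2
          omega
      have h00 : k + 1 ≤ H.mass (R.c 0) := (hmemF 0 (by omega)).2
      have hkn : k + R.n ≤ M := by
        have := hMi 0 (by omega); omega
      have hD : ∀ i, i < R.n → clOmega (R.c i) ≤ clAlpha (R.c i) + 3 * L ^ (M - R.n) := by
        intro i hi
        have h1 := (hC i hi).2.2
        have h2 : H.mass (R.c i) - 1 ≤ M - R.n := by
          have := hMi i hi; omega
        have h3 : L ^ (H.mass (R.c i) - 1) ≤ L ^ (M - R.n) :=
          Nat.pow_le_pow_right (by omega) h2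
        omega
      have hgap : ∀ i, i + 1 < R.n → clAlpha (R.c (i + 1)) ≤ clOmega (R.c i) + L ^ (k + 1) := by
        intro i hi
        obtain ⟨x, hx, y, hy, hd⟩ := clDist_exists (hC i (by omega)).1 (hC (i + 1) hi).1
        have hxω : x ≤ clOmega (R.c i) := le_clOmega hx
        have hαy : clAlpha (R.c (i + 1)) ≤ y := clAlpha_le hy
        have hord := R.ordered i hi
        have hclose := R.close i hi
        have hxy : x ≤ y := by omega
        rw [max_eq_right hxy, min_eq_left hxy] at hd
        omega
      have key : ∀ i, i < R.n → clOmega (R.c i) ≤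
          clAlpha (R.c 0) + (i + 1) * (3 * L ^ (M - R.n)) + i * L ^ (k + 1) := by
        intro i
        induction i with
        | zero =>
            intro hi
            have := hD 0 hi
            simpa using this
        | succ i ihk =>
            intro hi
            have h1 := ihk (by omega)
            have h2 := hgap i hi
            have h3 := hD (i + 1) hi
            have e1 : (i + 1 + 1) * (3 * L ^ (M - R.n)) =
                (i + 1) * (3 * L ^ (M - R.n)) + 3 * L ^ (M - R.n) := by ring
            have e2 : (i + 1) * L ^ (k + 1) = i * L ^ (k + 1) + L ^ (k + 1) := by ring
            rw [e1, e2]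
            linarith
      have hmono : ∀ i, i < R.n → clAlpha (R.c 0) ≤ clOmega (R.c i) := by
        intro i
        induction i with
        | zero => intro hi; exact clAlpha_le (clOmega_mem (hC 0 hi).1)
        | succ i ihk =>
            intro hi
            have h1 := R.ordered i hi
            have h2 := ihk (by omega)
            have h3 : clAlpha (R.c (i + 1)) ≤ clOmega (R.c (i + 1)) :=
              clAlpha_le (clOmega_mem (hC (i + 1) hi).1)
            omega
      have hab : clAlpha (R.c 0) ≤ clOmega (R.c (R.n - 1)) := hmono (R.n - 1) (by omega)
      have hamem : clAlpha (R.c 0) ∈ R.cluster Γ := by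
        rw [MaxRun.cluster, MaxRun.spanIcc, Finset.mem_filter, Finset.mem_Icc]
        exact ⟨⟨le_refl _, hab⟩,
          (hC 0 (by omega)).2.1 (Finset.mem_coe.mpr (clAlpha_mem (hC 0 (by omega)).1))⟩
      have hne : (R.cluster Γ).Nonempty := ⟨_, hamem⟩
      have hsub : (↑(R.cluster Γ) : Set ℕ) ⊆ Γ := by
        intro x hx
        rw [Finset.mem_coe, MaxRun.cluster, Finset.mem_filter] at hx
        exact hx.2
      have hαc : clAlpha (R.c 0) ≤ clAlpha (R.cluster Γ) := by
        refine le_csInf (Finset.coe_nonempty.mpr hne) ?_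
        intro x hx
        rw [Finset.mem_coe, MaxRun.cluster, Finset.mem_filter, MaxRun.spanIcc,
          Finset.mem_Icc] at hx
        exact hx.1.1
      have hωc : clOmega (R.cluster Γ) ≤ clOmega (R.c (R.n - 1)) := by
        refine csSup_le (Finset.coe_nonempty.mpr hne) ?_
        intro x hx
        rw [Finset.mem_coe, MaxRun.cluster, Finset.mem_filter, MaxRun.spanIcc,
          Finset.mem_Icc] at hx
        exact hx.1.2
      refine ⟨hne, hsub, ?_⟩
      have hkey := key (R.n - 1) (by omega)
      have hsucc : R.n - 1 + 1 = R.n := by omega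
      rw [hsucc] at hkey
      have hk1 : L ^ (k + 1) ≤ L ^ (M - R.n) * L := by
        have h1 : k + 1 ≤ (M - R.n) + 1 := by omega
        calc L ^ (k + 1) ≤ L ^ ((M - R.n) + 1) := Nat.pow_le_pow_right (by omega) h1
          _ = L ^ (M - R.n) * L := pow_succ L _
      obtain ⟨m, hm⟩ : ∃ m, R.n = m + 2 := ⟨R.n - 2, by omega⟩
      have harith := arith_aux hL m
      have hfinal : R.n * (3 * L ^ (M - R.n)) + (R.n - 1) * L ^ (k + 1) ≤ 3 * L ^ (M - 1) := by
        have hsplitpow : 3 * L ^ (M - 1) = 3 * L ^ (R.n - 1) * L ^ (M - R.n) := by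
          have hM1 : M - 1 = (R.n - 1) + (M - R.n) := by omega
          rw [hM1, pow_add, ← mul_assoc]
        calc R.n * (3 * L ^ (M - R.n)) + (R.n - 1) * L ^ (k + 1)
            ≤ R.n * (3 * L ^ (M - R.n)) + (R.n - 1) * (L ^ (M - R.n) * L) :=
              Nat.add_le_add_left (Nat.mul_le_mul_left _ hk1) _
          _ = (3 * R.n + (R.n - 1) * L) * L ^ (M - R.n) := by ring
          _ ≤ 3 * L ^ (R.n - 1) * L ^ (M - R.n) := by
              refine Nat.mul_le_mul_right _ ?_
              rw [hm]
              simpa using harith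
          _ = 3 * L ^ (M - 1) := hsplitpow.symm
      calc clOmega (R.cluster Γ) ≤ clOmega (R.c (R.n - 1)) := hωc
        _ ≤ clAlpha (R.c 0) + R.n * (3 * L ^ (M - R.n)) + (R.n - 1) * L ^ (k + 1) := hkey
        _ ≤ clAlpha (R.c 0) + 3 * L ^ (M - 1) := by omega
        _ ≤ clAlpha (R.cluster Γ) + 3 * L ^ (M - 1) := by omega

/-- If `L ≥ 3` and `C` is a cluster of level at least 1 with mass `k`, then
`diam(C) = ω(C) − α(C) ≤ 3·L^(k−1)`. -/
theorem diam_le_of_cluster (L : ℕ) (hL : 3 ≤ L) (Γ : Set ℕ) (H : ClusterHierarchy L Γ)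
    (c : Finset ℕ) (hc : H.IsCluster c) (hlev : 1 ≤ H.level c) (k : ℕ) (hk : H.mass c = k) :
    clOmega c - clAlpha c ≤ 3 * L ^ (k - 1) := by
  obtain ⟨j, hj⟩ := hc
  have h := (cluster_diam_bound L hL Γ H j c hj).2.2
  rw [hk] at h
  omega
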